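/- For every even integer m ≥ 4 and every integer h ≥ 1, the undirected optical index of the tree D_{m,h}, obtained from two disjoint copies of the complete m-ary tree of height h−1 by joining their two roots with an edge, is at most (1 + m + m^2 + … + m^{h−1})^2. -/

import Mathlib

open SimpleGraph

/-- An all-to-all routing in a simple graph `G`: a choice of one path between each
(unordered) pair of vertices. -/
structure Routing {V : Type*} (G : SimpleGraph V) where
  path : ∀ u v : V, G.Walk u v
  isPath : ∀ u v : V, (path u v).IsPath
  symm : ∀ u v : V, path v u = (path u v).reverse

/-- The conflict graph of a routing: vertices are unordered pairs of distinct vertices of `G`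
(i.e. the paths of the routing), two of them adjacent iff the corresponding paths share an
edge. -/
def Routing.conflictGraph {V : Type*} {G : SimpleGraph V} (R : Routing G) :
    SimpleGraph {p : Sym2 V // ¬ p.IsDiag} where
  Adj p q := p ≠ q ∧ ∃ (u v u' v' : V) (e : Sym2 V),
      (p : Sym2 V) = s(u, v) ∧ (q : Sym2 V) = s(u', v') ∧
      e ∈ (R.path u v).edges ∧ e ∈ (R.path u' v').edges
  symm := by
    constructor
    rintro p q ⟨hne, u, v, u', v', e, hp, hq, h1, h2⟩
    exact ⟨hne.symm, u', v', u, v, e, hq, hp, h2, h1⟩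
  loopless := by
    constructor
    rintro p ⟨hne, -⟩
    exact hne rfl

/-- The undirected optical index `w(G)`: the minimum over all all-to-all routings `R`
of the chromatic number of the conflict graph `Q(R)`. -/
noncomputable def opticalIndex {V : Type*} (G : SimpleGraph V) : ℕ :=
  sInf {n | ∃ R : Routing G, R.conflictGraph.Colorable n}

/-- The load of an edge `e` under a routing: the number of paths of the routing
containing `e`. -/
noncomputable def Routing.load {V : Type*} {G : SimpleGraph V} (R : Routing G)
    (e : Sym2 V) : ℕ :=
  Nat.card {p : {p : Sym2 V // ¬ p.IsDiag} //
    ∃ u v : V, (p : Sym2 V) = s(u, v) ∧ e ∈ (R.path u v).edges}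

/-- The edge-forwarding index `π(G)`: the minimum over all all-to-all routings of the
maximum edge load. -/
noncomputable def forwardingIndex {V : Type*} (G : SimpleGraph V) : ℕ :=
  sInf {n | ∃ R : Routing G, ∀ e ∈ G.edgeSet, R.load e ≤ n}

/-- The complete `m`-ary tree of height `h`: vertices are words over `Fin m` of length
at most `h` (the root is the empty word), a vertex being adjacent to its parent. -/
def completeMAryTree (m h : ℕ) : SimpleGraph {l : List (Fin m) // l.length ≤ h} where
  Adj x y := (∃ a : Fin m, x.val = a :: y.val) ∨ (∃ a : Fin m, y.val = a :: x.val)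
  symm := ⟨fun x y hxy => Or.symm hxy⟩
  loopless := by
    constructor
    rintro x (⟨a, ha⟩ | ⟨a, ha⟩) <;> exact List.cons_ne_self a x.val ha.symm

/-- The tree `D_{m,h}`: two disjoint copies of the complete `m`-ary tree of height `h-1`
with an edge joining the two roots. -/
def doubleMAryTree (m h : ℕ) :
    SimpleGraph (Bool × {l : List (Fin m) // l.length ≤ h - 1}) where
  Adj x y := (x.1 = y.1 ∧ ((∃ a : Fin m, x.2.val = a :: y.2.val) ∨
      (∃ a : Fin m, y.2.val = a :: x.2.val)))
    ∨ (x.1 ≠ y.1 ∧ x.2.val = [] ∧ y.2.val = [])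
  symm := by
    constructor
    rintro x y (⟨hb, hxy⟩ | ⟨hb, h1, h2⟩)
    · exact Or.inl ⟨hb.symm, Or.symm hxy⟩
    · exact Or.inr ⟨hb.symm, h2, h1⟩
  loopless := by
    constructor
    rintro x (⟨-, (⟨a, ha⟩ | ⟨a, ha⟩)⟩ | ⟨hb, -⟩)
    · exact List.cons_ne_self a _ ha.symm
    · exact List.cons_ne_self a _ ha.symm
    · exact hb rfl

/-!
Colour the paths by pairs `(α, β)` of vertices of `T_{m,h-1}`, which gives
`(1 + m + ⋯ + m^(h-1))²` colours. The path from `α` in the first copy to `β` in the second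
gets colour `(α, β)`. A path between `a ≤ b` inside the first copy gets colour `(a', b)`, where
the word `a'` is obtained from `a` by replacing the letter just below the branch point of `a`
and `b` by a letter different from both branches (here `m ≥ 3` is used). No edge of the root
path of `a'` lies on the path from `a` to `b`, and `a ↦ a'` is injective for fixed `b`; paths
inside the second copy are treated symmetrically with colour `(b, a')`. Hence each colour
class consists of one path between the copies and at most one path inside each copy, and
these are pairwise edge-disjoint.
-/

section Routing

variable {V : Type*} {G : SimpleGraph V}

theorem SimpleGraph.exists_walk_iterate {f : V → V} (hf : ∀ x, G.Adj x (f x)) {P : V → Prop}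
    (x : V) (n : ℕ) (hP : ∀ k < n, P (f^[k] x)) :
    ∃ W : G.Walk x (f^[n] x), ∀ e ∈ W.edges, ∃ y, P y ∧ e = s(y, f y) := by
  induction n generalizing x with
  | zero => exact ⟨.nil, by simp⟩
  | succ n ih =>
    obtain ⟨W, hW⟩ := ih (f x) fun k hk => hP (k + 1) (by omega)
    refine ⟨(Walk.cons (hf x) W).copy rfl (f.iterate_succ_apply n x).symm, ?_⟩
    simp only [Walk.edges_copy, Walk.edges_cons, List.mem_cons, forall_eq_or_imp]
    exact ⟨⟨x, hP 0 (by omega), rfl⟩, hW⟩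

theorem SimpleGraph.exists_walk_of_iterate_eq {f : V → V} (hf : ∀ x, G.Adj x (f x))
    {P : V → Prop} {u v : V} {i j : ℕ} (huv : f^[i] u = f^[j] v)
    (hu : ∀ k < i, P (f^[k] u)) (hv : ∀ k < j, P (f^[k] v)) :
    ∃ W : G.Walk u v, ∀ e ∈ W.edges, ∃ y, P y ∧ e = s(y, f y) := by
  obtain ⟨Wu, hWu⟩ := exists_walk_iterate hf u i hu
  obtain ⟨Wv, hWv⟩ := exists_walk_iterate hf v j hv
  refine ⟨Wu.append (Wv.reverse.copy huv.symm rfl), fun e he => ?_⟩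
  simp only [Walk.edges_append, Walk.edges_copy, Walk.edges_reverse, List.mem_append,
    List.mem_reverse] at he
  exact he.elim (hWu e) (hWv e)

theorem Routing.exists_forall_mem_edges {S : V → V → Sym2 V → Prop}
    (hS : ∀ u v e, S u v e → S v u e) (hW : ∀ u v, ∃ W : G.Walk u v, ∀ e ∈ W.edges, S u v e) :
    ∃ R : Routing G, ∀ u v, ∀ e ∈ (R.path u v).edges, S u v e := by
  classical
  choose W hW using hW
  let : LinearOrder V := IsWellOrder.linearOrder WellOrderingRel
  refine ⟨⟨fun u v => if u ≤ v then (W u v).bypass else (W v u).bypass.reverse,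
    fun u v => ?_, fun u v => ?_⟩, fun u v e he => ?_⟩
  · split
    · exact (W u v).bypass_isPath
    · exact (W v u).bypass_isPath.reverse
  · rcases lt_trichotomy u v with huv | rfl | huv
    · simp [huv.le, huv.not_ge]
    · simp [Walk.eq_nil_iff_nil.mpr (Walk.isPath_iff_nil.mp (W u u).bypass_isPath)]
    · simp [huv.le, huv.not_ge]
  · dsimp only at he
    split at he
    · exact hW u v e (Walk.edges_bypass_subset_edges _ he)
    · rw [Walk.edges_reverse, List.mem_reverse] at he
      exact hS v u e (hW v u e (Walk.edges_bypass_subset_edges _ he))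

theorem Routing.colorable_of_eq_of_mem_edges {C : Type*} [Fintype C] (R : Routing G)
    (c : V → V → C) (hc : ∀ u v, c u v = c v u)
    (h : ∀ u v u' v' e, e ∈ (R.path u v).edges → e ∈ (R.path u' v').edges →
      c u v = c u' v' → s(u, v) = s(u', v')) :
    R.conflictGraph.Colorable (Fintype.card C) := by
  refine (Coloring.mk (fun p => Sym2.lift ⟨c, hc⟩ p.val) ?_).colorable
  rintro p q ⟨hpq, u, v, u', v', e, hp, hq, he, he'⟩ hcol
  simp only [hp, hq, Sym2.lift_mk] at hcol
  exact hpq (Subtype.ext (by rw [hp, hq]; exact h u v u' v' e he he' hcol))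

end Routing

namespace List

variable {α : Type*}

theorem exists_forall_prefix_iff : ∀ a b : List α, ∃ r, ∀ t, t <+: r ↔ t <+: a ∧ t <+: b
  | c :: a, d :: b => by
    by_cases hcd : c = d
    · subst hcd
      obtain ⟨r, hr⟩ := exists_forall_prefix_iff a b
      refine ⟨c :: r, fun t => ?_⟩
      rcases t with _ | ⟨e, t⟩
      · simp
      · simp only [cons_prefix_cons, hr]
        tauto
    · refine ⟨[], fun t => ?_⟩
      rcases t with _ | ⟨e, t⟩
      · simp
      · simp only [cons_prefix_cons, prefix_nil, reduceCtorEq, false_iff]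
        rintro ⟨⟨rfl, -⟩, rfl, -⟩
        exact hcd rfl
  | [], _ => ⟨[], fun _ => ⟨fun h => ⟨h, prefix_nil.mp h ▸ nil_prefix⟩, And.left⟩⟩
  | _ :: _, [] => ⟨[], fun _ => ⟨fun h => ⟨prefix_nil.mp h ▸ nil_prefix, h⟩, And.right⟩⟩

theorem exists_forall_suffix_iff (a b : List α) : ∃ r, ∀ t, t <:+ r ↔ t <:+ a ∧ t <:+ b := by
  obtain ⟨r, hr⟩ := exists_forall_prefix_iff a.reverse b.reverse
  refine ⟨r.reverse, fun t => ?_⟩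
  rw [← reverse_prefix, ← reverse_prefix, ← reverse_prefix, reverse_reverse]
  exact hr t.reverse

def lengthLeEquivSigmaVector (α : Type*) (n : ℕ) :
    {l : List α // l.length ≤ n} ≃ Σ i : Fin (n + 1), List.Vector α i where
  toFun l := ⟨⟨l.val.length, Nat.lt_succ_of_le l.2⟩, ⟨l.val, rfl⟩⟩
  invFun p := ⟨p.2.val, p.2.2.trans_le (Nat.le_of_lt_succ p.1.2)⟩
  right_inv := by
    rintro ⟨⟨i, hi⟩, ⟨l, hl : l.length = i⟩⟩
    subst hl
    rfl

instance [Fintype α] (n : ℕ) : Fintype {l : List α // l.length ≤ n} :=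
  Fintype.ofEquiv _ (lengthLeEquivSigmaVector α n).symm

theorem card_length_le (α : Type*) [Fintype α] (n : ℕ) :
    Fintype.card {l : List α // l.length ≤ n} =
      ∑ i ∈ Finset.range (n + 1), Fintype.card α ^ i := by
  rw [Fintype.card_congr (lengthLeEquivSigmaVector α n), Fintype.card_sigma]
  simp only [card_vector]
  exact Fin.sum_univ_eq_sum_range (Fintype.card α ^ ·) (n + 1)

end List

/-- `avoid o c` replaces the letter `c` of one word, `o` being the letter of the other word at
the same position (if any). -/
structure LetterAvoidance (α : Type*) where
  avoid : Option α → α → α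
  avoid_ne_self : ∀ o c, avoid o c ≠ c
  avoid_ne_of_some : ∀ d c, avoid (some d) c ≠ d
  injOn_avoid : ∀ o, Set.InjOn (avoid o) {c | o ≠ some c}

namespace LetterAvoidance

theorem nonempty_fin {m : ℕ} (hm : 3 ≤ m) : Nonempty (LetterAvoidance (Fin m)) := by
  obtain ⟨n, rfl⟩ : ∃ n, m = n + 3 := ⟨m - 3, by omega⟩
  have h1 : ∀ c : Fin (n + 3), c + 1 ≠ c := by simp
  have h2 : ∀ c : Fin (n + 3), c + 1 + 1 ≠ c := by
    intro c
    rw [add_assoc, Ne, add_eq_left, Fin.ext_iff, Fin.val_add, Fin.val_one, Fin.val_zero,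
      Nat.mod_eq_of_lt (by omega)]
    omega
  refine ⟨⟨fun o c => if o = some (c + 1) then c + 1 + 1 else c + 1, fun o c => ?_,
    fun d c => ?_, fun o c hc c' hc' hcc' => ?_⟩⟩
  · split_ifs
    exacts [h2 c, h1 c]
  · split_ifs with h
    · rw [Option.some_inj.mp h]
      exact h1 _
    · exact fun h' => h (h' ▸ rfl)
  · dsimp only at hcc'
    split_ifs at hcc' with h h' h'
    · exact add_right_cancel (add_right_cancel hcc')
    · exact absurd (h.trans (congrArg _ (add_right_cancel hcc'))) hc'
    · exact absurd (h'.trans (congrArg _ (add_right_cancel hcc').symm)) hc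
    · exact add_right_cancel hcc'

variable {α : Type*} [DecidableEq α] (σ : LetterAvoidance α)

def deflect : List α → List α → List α
  | d :: b, c :: a => if c = d then c :: deflect b a else σ.avoid (some d) c :: a
  | [], c :: a => σ.avoid none c :: a
  | _, [] => []

@[simp]
theorem length_deflect : ∀ b a : List α, (σ.deflect b a).length = a.length
  | d :: b, c :: a => by
    simp only [deflect]
    split_ifs <;> simp [length_deflect b a]
  | [], c :: a => by simp [deflect]
  | _, [] => by simp [deflect]

theorem prefix_iff_of_prefix_deflect :
    ∀ {b a x : List α}, x <+: σ.deflect b a → (x <+: a ↔ x <+: b)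
  | _, _, [], _ => by simp
  | _, [], _ :: _, hx => by simp [deflect] at hx
  | [], c :: a, y :: x, hx => by
    simp only [deflect, List.cons_prefix_cons] at hx
    obtain ⟨rfl, -⟩ := hx
    simp [List.cons_prefix_cons, σ.avoid_ne_self]
  | d :: b, c :: a, y :: x, hx => by
    simp only [deflect] at hx
    split_ifs at hx with hcd
    · subst hcd
      obtain ⟨rfl, hx'⟩ := List.cons_prefix_cons.mp hx
      simp [List.cons_prefix_cons, prefix_iff_of_prefix_deflect hx']
    · obtain ⟨rfl, -⟩ := List.cons_prefix_cons.mp hx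
      simp [List.cons_prefix_cons, σ.avoid_ne_self, σ.avoid_ne_of_some]

theorem deflect_injective (b : List α) : Function.Injective (σ.deflect b) := by
  induction b with
  | nil =>
    rintro (_ | ⟨c, a⟩) (_ | ⟨c', a'⟩) h <;> simp only [deflect, List.cons.injEq, reduceCtorEq] at h
    · rfl
    · rw [σ.injOn_avoid none (by simp) (by simp) h.1, h.2]
  | cons d b ih =>
    rintro (_ | ⟨c, a⟩) (_ | ⟨c', a'⟩) h
    · rfl
    · simpa using congrArg List.length h
    · simpa using congrArg List.length h
    · simp only [deflect] at h
      split_ifs at h with hc hc' hc'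
      · obtain ⟨rfl, htail⟩ := List.cons.inj h
        rw [ih htail]
      · exact absurd (List.cons.inj h).1.symm (hc ▸ σ.avoid_ne_of_some d c')
      · exact absurd (List.cons.inj h).1 (hc' ▸ σ.avoid_ne_of_some d c)
      · obtain ⟨hhead, rfl⟩ := List.cons.inj h
        rw [σ.injOn_avoid (some d) (by simpa [eq_comm] using hc) (by simpa [eq_comm] using hc')
          hhead]

end LetterAvoidance

namespace DoubleMAryTree

open List

variable {m h : ℕ}

abbrev HalfVertex (m h : ℕ) := {l : List (Fin m) // l.length ≤ h - 1}

/-- The parent map, except that the two roots are each other's parent: the middle edge serves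
as the root. The path from `u` to `v` then uses exactly the edges `s(x, up x)` for the `x` that
are ancestors of exactly one of `u`, `v`. -/
def up : Bool × HalfVertex m h → Bool × HalfVertex m h
  | (s, ⟨[], hl⟩) => (!s, ⟨[], hl⟩)
  | (s, ⟨_ :: l, hl⟩) => (s, ⟨l, (Nat.le_succ _).trans hl⟩)

theorem adj_up : ∀ x : Bool × HalfVertex m h, (doubleMAryTree m h).Adj x (up x)
  | (s, ⟨[], _⟩) => Or.inr ⟨by simp [up], rfl, rfl⟩
  | (_, ⟨c :: _, _⟩) => Or.inl ⟨rfl, Or.inl ⟨c, rfl⟩⟩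

theorem iterate_up_of_le : ∀ (x : Bool × HalfVertex m h) (k : ℕ), k ≤ x.2.val.length →
    (up^[k] x).1 = x.1 ∧ (up^[k] x).2.val = x.2.val.drop k
  | _, 0, _ => ⟨rfl, rfl⟩
  | (_, ⟨[], _⟩), _ + 1, hk => absurd hk (by simp)
  | (s, ⟨_ :: l, hl⟩), k + 1, hk => iterate_up_of_le (s, ⟨l, _⟩) k (by simpa using hk)

theorem iterate_up_length (x : Bool × HalfVertex m h) :
    up^[x.2.val.length] x = (x.1, ⟨[], Nat.zero_le _⟩) := by
  obtain ⟨h1, h2⟩ := iterate_up_of_le x _ le_rfl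
  exact Prod.ext h1 (Subtype.ext (h2.trans (drop_length)))

theorem length_up_le (x : Bool × HalfVertex m h) : (up x).2.val.length ≤ x.2.val.length := by
  rcases x with ⟨s, _ | ⟨c, l⟩, hl⟩ <;> simp [up]

def IsAncestor (x u : Bool × HalfVertex m h) : Prop :=
  x.1 = u.1 ∧ x.2.val <:+ u.2.val

theorem isAncestor_iterate_up {u : Bool × HalfVertex m h} {k : ℕ} (hk : k ≤ u.2.val.length) :
    IsAncestor (up^[k] u) u := by
  obtain ⟨h1, h2⟩ := iterate_up_of_le u k hk
  exact ⟨h1, h2 ▸ drop_suffix _ _⟩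

theorem not_isAncestor_iterate_up {u v : Bool × HalfVertex m h} {r : List (Fin m)}
    (hr : ∀ t, t <:+ r ↔ t <:+ u.2.val ∧ t <:+ v.2.val) {k : ℕ}
    (hk : k + r.length < u.2.val.length) : ¬ IsAncestor (up^[k] u) v := by
  rintro ⟨-, hv⟩
  obtain ⟨-, h2⟩ := iterate_up_of_le u k (by omega)
  have := ((hr _).mpr ⟨h2 ▸ drop_suffix _ _, hv⟩).length_le
  simp only [h2, length_drop] at this
  omega

theorem exists_iterate_up_eq (u v : Bool × HalfVertex m h) : ∃ i j, up^[i] u = up^[j] v ∧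
    (∀ k < i, Xor (IsAncestor (up^[k] u) u) (IsAncestor (up^[k] u) v)) ∧
    (∀ k < j, Xor (IsAncestor (up^[k] v) u) (IsAncestor (up^[k] v) v)) := by
  by_cases huv : u.1 = v.1
  · obtain ⟨r, hr⟩ := exists_forall_suffix_iff u.2.val v.2.val
    have hru := ((hr r).mp suffix_rfl).1
    have hrv := ((hr r).mp suffix_rfl).2
    refine ⟨u.2.val.length - r.length, v.2.val.length - r.length, ?_,
      fun k hk => Or.inl ⟨isAncestor_iterate_up (by omega), not_isAncestor_iterate_up hr ?_⟩,
      fun k hk => Or.inr ⟨isAncestor_iterate_up (by omega),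
        not_isAncestor_iterate_up (u := v) (fun t => (hr t).trans and_comm) ?_⟩⟩
    · obtain ⟨hu1, hu2⟩ := iterate_up_of_le u (u.2.val.length - r.length) (by omega)
      obtain ⟨hv1, hv2⟩ := iterate_up_of_le v (v.2.val.length - r.length) (by omega)
      refine Prod.ext (hu1.trans (huv.trans hv1.symm)) (Subtype.ext ?_)
      rw [hu2, hv2, ← suffix_iff_eq_drop.mp hru, ← suffix_iff_eq_drop.mp hrv]
    · have := hru.length_le
      omega
    · have := hrv.length_le
      omega
  · refine ⟨u.2.val.length + 1, v.2.val.length, ?_,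
      fun k hk => Or.inl ⟨isAncestor_iterate_up (by omega), fun h => huv ?_⟩,
      fun k hk => Or.inr ⟨isAncestor_iterate_up (by omega), fun h => huv ?_⟩⟩
    · rw [Function.iterate_succ_apply', iterate_up_length, iterate_up_length]
      simp only [up, Prod.mk.injEq, and_true]
      revert huv
      cases u.1 <;> cases v.1 <;> simp
    · exact (iterate_up_of_le u k (by omega)).1.symm.trans h.1
    · exact h.1.symm.trans (iterate_up_of_le v k (by omega)).1

theorem exists_routing : ∃ R : Routing (doubleMAryTree m h), ∀ u v, ∀ e ∈ (R.path u v).edges,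
    ∃ x, Xor (IsAncestor x u) (IsAncestor x v) ∧ e = s(x, up x) :=
  Routing.exists_forall_mem_edges (fun u v e ⟨x, hx, he⟩ => ⟨x, xor_comm _ _ ▸ hx, he⟩)
    fun u v => by
      obtain ⟨i, j, huv, hu, hv⟩ := exists_iterate_up_eq u v
      exact exists_walk_of_iterate_eq adj_up huv hu hv

variable (σ : LetterAvoidance (Fin m))

def deflect (b a : HalfVertex m h) : HalfVertex m h :=
  ⟨(σ.deflect b.val.reverse a.val.reverse).reverse, by simpa using a.2⟩

theorem suffix_iff_of_suffix_deflect {b a : HalfVertex m h} {t : List (Fin m)}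
    (ht : t <:+ (deflect σ b a).val) : t <:+ a.val ↔ t <:+ b.val := by
  rw [← reverse_prefix, ← reverse_prefix]
  exact σ.prefix_iff_of_prefix_deflect (by simpa [deflect, ← reverse_prefix] using ht)

theorem deflect_injective (b : HalfVertex m h) : Function.Injective (deflect σ b) :=
  fun _ _ h => Subtype.ext <| reverse_injective <|
    σ.deflect_injective _ (reverse_injective (congrArg Subtype.val h))

def color : Bool × HalfVertex m h → Bool × HalfVertex m h → HalfVertex m h × HalfVertex m h
  | (false, a), (false, b) => (deflect σ (max a b) (min a b), max a b)
  | (true, a), (true, b) => (max a b, deflect σ (max a b) (min a b))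
  | (false, a), (true, b) => (a, b)
  | (true, a), (false, b) => (b, a)

theorem color_comm (u v : Bool × HalfVertex m h) : color σ u v = color σ v u := by
  rcases u with ⟨_ | _, a⟩ <;> rcases v with ⟨_ | _, b⟩ <;> simp [color, max_comm, min_comm]

open Classical in
/-- The colour class of `c` is the path from `(false, c.1)` to `(true, c.2)` together with at most
one path inside each half; `region c x` is the pair of sides of the one that may use the edge
above `x`. -/
noncomputable def region (c : HalfVertex m h × HalfVertex m h) (x : Bool × HalfVertex m h) :
    Sym2 Bool :=
  if IsAncestor x (false, c.1) ∨ IsAncestor x (true, c.2) then s(false, true) else s(x.1, x.1)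

theorem not_isAncestor_deflect {s s' : Bool} {a b : HalfVertex m h} {x : Bool × HalfVertex m h}
    (hx : Xor (IsAncestor x (s, a)) (IsAncestor x (s, b))) :
    ¬ IsAncestor x (s', deflect σ (max a b) (min a b)) := by
  rintro ⟨-, ht⟩
  have hab := suffix_iff_of_suffix_deflect σ ht
  have hab' : x.2.val <:+ a.val ↔ x.2.val <:+ b.val := by
    rcases le_total a b with hle | hle
    · rwa [max_eq_right hle, min_eq_left hle] at hab
    · rw [max_eq_left hle, min_eq_right hle] at hab
      exact hab.symm
  simp only [Xor, IsAncestor, hab'] at hx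
  tauto

theorem region_color {u v x : Bool × HalfVertex m h}
    (hx : Xor (IsAncestor x u) (IsAncestor x v)) : region (color σ u v) x = s(u.1, v.1) := by
  rcases u with ⟨_ | _, a⟩ <;> rcases v with ⟨_ | _, b⟩
  · have hx1 : x.1 = false := hx.elim (·.1.1) (·.1.1)
    rw [region, if_neg, hx1]
    rintro (h | h)
    exacts [not_isAncestor_deflect σ hx h, Bool.false_ne_true (hx1.symm.trans h.1)]
  · rw [region, if_pos]
    exact hx.elim (fun h => .inl h.1) (fun h => .inr h.1)
  · rw [region, if_pos, Sym2.eq_swap]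
    exact hx.elim (fun h => .inr h.1) (fun h => .inl h.1)
  · have hx1 : x.1 = true := hx.elim (·.1.1) (·.1.1)
    rw [region, if_neg, hx1]
    rintro (h | h)
    exacts [Bool.false_ne_true (h.1.symm.trans hx1), not_isAncestor_deflect σ hx h]

theorem region_root (c : HalfVertex m h × HalfVertex m h) (s : Bool) (hl : [].length ≤ h - 1) :
    region c (s, ⟨[], hl⟩) = s(false, true) := by
  cases s <;> simp [region, IsAncestor]

theorem region_eq_of_up {x y : Bool × HalfVertex m h} (hxy : s(x, up x) = s(y, up y))
    (c : HalfVertex m h × HalfVertex m h) : region c x = region c y := by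
  rcases Sym2.eq_iff.mp hxy with ⟨rfl, -⟩ | ⟨rfl, hy⟩
  · rfl
  rcases y with ⟨s, _ | ⟨a, l⟩, hl⟩
  · rw [up, region_root, region_root]
  · have := (congrArg (·.2.val.length) hy).symm.trans_le (length_up_le (up (s, ⟨a :: l, hl⟩)))
    simp [up] at this

theorem sym2_eq_of_deflect_eq {a b a' b' : HalfVertex m h} (hmax : max a b = max a' b')
    (hdef : deflect σ (max a b) (min a b) = deflect σ (max a' b') (min a' b')) :
    s(a, b) = s(a', b') := by
  rw [hmax] at hdef
  exact Sym2.inf_eq_inf_and_sup_eq_sup.mp ⟨deflect_injective σ _ hdef, hmax⟩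

theorem eq_of_color_eq {u v u' v' : Bool × HalfVertex m h} (hc : color σ u v = color σ u' v')
    (hs : s(u.1, v.1) = s(u'.1, v'.1)) : s(u, v) = s(u', v') := by
  rcases u with ⟨_ | _, a⟩ <;> rcases v with ⟨_ | _, b⟩ <;> rcases u' with ⟨_ | _, a'⟩ <;>
    rcases v' with ⟨_ | _, b'⟩ <;> simp only [color, Prod.mk.injEq, Sym2.eq, Sym2.rel_iff',
      Prod.swap_prod_mk, Bool.false_eq_true, Bool.true_eq_false, true_and, false_and, and_true,
      and_false, and_self, or_self, or_true, or_false, false_or] at hc hs ⊢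
  case false.false.false.false => exact Sym2.eq_iff.mp (sym2_eq_of_deflect_eq σ hc.2 hc.1)
  case true.true.true.true => exact Sym2.eq_iff.mp (sym2_eq_of_deflect_eq σ hc.1 hc.2)
  all_goals tauto

theorem eq_of_color_eq_of_mem_edges {R : Routing (doubleMAryTree m h)}
    (hR : ∀ u v, ∀ e ∈ (R.path u v).edges,
      ∃ x, Xor (IsAncestor x u) (IsAncestor x v) ∧ e = s(x, up x))
    {u v u' v' : Bool × HalfVertex m h} {e : Sym2 (Bool × HalfVertex m h)}
    (he : e ∈ (R.path u v).edges) (he' : e ∈ (R.path u' v').edges)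
    (hc : color σ u v = color σ u' v') : s(u, v) = s(u', v') := by
  obtain ⟨x, hx, rfl⟩ := hR u v e he
  obtain ⟨y, hy, hxy⟩ := hR u' v' _ he'
  refine eq_of_color_eq σ hc ?_
  rw [← region_color σ hx, ← region_color σ hy, hc, region_eq_of_up hxy]

end DoubleMAryTree

theorem opticalIndex_doubleMAryTree_le_general (m h : ℕ) (hm4 : 4 ≤ m) (hh : 1 ≤ h) :
    opticalIndex (doubleMAryTree m h) ≤ (∑ i ∈ Finset.range h, m ^ i) ^ 2 := by
  obtain ⟨σ⟩ := LetterAvoidance.nonempty_fin (by omega : 3 ≤ m)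
  obtain ⟨R, hR⟩ := DoubleMAryTree.exists_routing (m := m) (h := h)
  have hR' := R.colorable_of_eq_of_mem_edges (DoubleMAryTree.color σ)
    (DoubleMAryTree.color_comm σ) fun _ _ _ _ _ he he' =>
      DoubleMAryTree.eq_of_color_eq_of_mem_edges σ hR he he'
  rw [Fintype.card_prod, List.card_length_le, Nat.sub_add_cancel hh, Fintype.card_fin,
    ← sq] at hR'
  exact Nat.sInf_le ⟨R, hR'⟩

/-- for every even integer `m ≥ 4` and every integer `h ≥ 1`, the undirected
optical index of the tree `D_{m,h}` (two disjoint copies of the complete `m`-ary tree of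
height `h−1` joined by an edge between the two roots) is at most
`(1 + m + m² + … + m^(h−1))²`. -/
theorem opticalIndex_doubleMAryTree_le (m h : ℕ) (hm : Even m) (hm4 : 4 ≤ m) (hh : 1 ≤ h) :
    opticalIndex (doubleMAryTree m h) ≤ (∑ i ∈ Finset.range h, m ^ i) ^ 2 :=
  opticalIndex_doubleMAryTree_le_general m h hm4 hh
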